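/- Let (X_1,...,X_r) be a centered jointly Gaussian vector and r odd. Then E[X_1 X_2 ··· X_r] = 0. If r is even, then E[X_1 ··· X_r] = Σ_π Π_{blocks {a,b} of π} E[X_a X_b], where π ranges over pair partitions of {1,...,r} (Wick's formula). -/

import Mathlib

open Finset MeasureTheory ProbabilityTheory


open Finset MeasureTheory ProbabilityTheory Real Set

noncomputable def df : ℕ → ℝ
  | 0 => 1
  | (m+1) => (2*m+1) * df m

lemma df_mul_fact (m : ℕ) : df m * ((m.factorial : ℝ) * 2^m) = ((2*m).factorial : ℝ) := by
  induction m with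
  | zero => simp [df]
  | succ m ih =>
    have h2 : 2 * (m+1) = (2*m+1) + 1 := by ring
    rw [h2, Nat.factorial_succ, Nat.factorial_succ]
    push_cast
    rw [df, Nat.factorial_succ]
    push_cast
    linear_combination (2*(m:ℝ)+1) * ((m:ℝ)+1) * 2 * ih

lemma pow_div_fact_le_exp {y : ℝ} (hy : 0 ≤ y) (m : ℕ) : y ^ m / m.factorial ≤ Real.exp y := by
  have h := Real.sum_le_exp_of_nonneg hy (m+1)
  refine le_trans ?_ h
  have : y ^ m / m.factorial = ∑ i ∈ {m}, y ^ i / i.factorial := by simp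
  rw [this]
  exact Finset.sum_le_sum_of_subset_of_nonneg (by simp) (fun i _ _ => by positivity)

lemma integrable_abs_pow_mul_exp {b : ℝ} (hb : 0 < b) (n : ℕ) :
    Integrable (fun x : ℝ => |x| ^ n * Real.exp (-b * x ^ 2)) := by
  have hmeas : AEStronglyMeasurable (fun x : ℝ => |x| ^ n * Real.exp (-b * x ^ 2)) volume := by
    apply Measurable.aestronglyMeasurable
    exact ((measurable_id.abs.pow measurable_const).mul
      (((measurable_id.pow measurable_const).const_mul (-b)).exp))
  refine Integrable.mono' (((integrable_exp_neg_mul_sq (half_pos hb)).const_mul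
    (1 + (n.factorial : ℝ) * (2/b)^n))) hmeas ?_
  filter_upwards with x
  have hx2 : (0:ℝ) ≤ x ^ 2 := sq_nonneg x
  have key : |x| ^ n ≤ 1 + (x ^ 2) ^ n := by
    rcases le_total (|x|) 1 with h | h
    · have : |x| ^ n ≤ 1 := pow_le_one₀ (abs_nonneg x) h
      nlinarith [pow_nonneg hx2 n]
    · have h1 : |x| ^ n ≤ |x| ^ (2*n) := pow_le_pow_right₀ h (by omega)
      have h2 : |x| ^ (2*n) = (x ^ 2) ^ n := by
        rw [pow_mul, sq_abs]
      nlinarith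
  have key2 : (x ^ 2) ^ n ≤ (n.factorial : ℝ) * (2/b)^n * Real.exp ((b/2) * x^2) := by
    have h := pow_div_fact_le_exp (y := (b/2) * x^2) (by positivity) n
    have hfact : (0:ℝ) < n.factorial := by positivity
    rw [div_le_iff₀ hfact] at h
    have hexp : ((b/2) * x^2) ^ n = (b/2)^n * (x^2)^n := mul_pow _ _ _
    rw [hexp] at h
    have hb2 : (0:ℝ) < (b/2)^n := by positivity
    calc (x ^ 2) ^ n = ((b/2)^n * (x^2)^n) * (2/b)^n := by
          rw [mul_comm ((b/2)^n), mul_assoc, ← mul_pow, div_mul_div_comm, mul_comm b 2,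
            div_self (by positivity : (2:ℝ)*b ≠ 0), one_pow, mul_one]
      _ ≤ (Real.exp ((b/2) * x^2) * n.factorial) * (2/b)^n := by
          apply mul_le_mul_of_nonneg_right h (by positivity)
      _ = (n.factorial : ℝ) * (2/b)^n * Real.exp ((b/2) * x^2) := by ring
  have habs : ‖|x| ^ n * Real.exp (-b * x ^ 2)‖ = |x| ^ n * Real.exp (-b * x ^ 2) := by
    rw [Real.norm_eq_abs, abs_of_nonneg (by positivity)]
  rw [habs]
  have t1 : Real.exp (-b * x^2) ≤ Real.exp (-(b/2) * x^2) := Real.exp_le_exp.2 (by nlinarith)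
  have t2 : (x^2)^n * Real.exp (-b * x^2)
      ≤ (n.factorial : ℝ) * (2/b)^n * Real.exp (-(b/2) * x^2) := by
    have h := mul_le_mul_of_nonneg_right key2 (Real.exp_nonneg (-b * x^2))
    refine h.trans (le_of_eq ?_)
    rw [mul_assoc, ← Real.exp_add]
    ring_nf
  have base := mul_le_mul_of_nonneg_right key (Real.exp_nonneg (-b * x^2))
  nlinarith [base, t1, t2]

lemma integrable_pow_mul_exp {b : ℝ} (hb : 0 < b) (n : ℕ) :
    Integrable (fun x : ℝ => x ^ n * Real.exp (-b * x ^ 2)) := by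
  refine (integrable_abs_pow_mul_exp hb n).mono' ?_ ?_
  · apply Measurable.aestronglyMeasurable
    exact ((measurable_id.pow measurable_const).mul
      (((measurable_id.pow measurable_const).const_mul (-b)).exp))
  · filter_upwards with x
    rw [Real.norm_eq_abs, abs_mul, abs_pow, abs_of_nonneg (Real.exp_nonneg _)]

open Set
open scoped NNReal ENNReal

section GaussMoments

lemma gaussianReal_eq_withDensity {v : ℝ≥0} (hv : v ≠ 0) :
    gaussianReal 0 v = volume.withDensity
      (fun x => ((gaussianPDFReal 0 v x).toNNReal : ℝ≥0∞)) := by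
  rw [gaussianReal_of_var_ne_zero 0 hv]
  rfl

lemma integral_gaussianReal_eq {v : ℝ≥0} (hv : v ≠ 0) (g : ℝ → ℝ) :
    ∫ x, g x ∂(gaussianReal 0 v) = ∫ x, gaussianPDFReal 0 v x * g x := by
  rw [gaussianReal_eq_withDensity hv,
    integral_withDensity_eq_integral_smul (measurable_gaussianPDFReal 0 v).real_toNNReal g]
  congr 1; ext x
  simp [NNReal.smul_def, Real.coe_toNNReal _ (gaussianPDFReal_nonneg 0 v x)]

lemma integrable_gaussianReal_iff {v : ℝ≥0} (hv : v ≠ 0) (g : ℝ → ℝ) :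
    Integrable g (gaussianReal 0 v) ↔
      Integrable (fun x => gaussianPDFReal 0 v x * g x) volume := by
  rw [gaussianReal_eq_withDensity hv,
    integrable_withDensity_iff_integrable_smul (measurable_gaussianPDFReal 0 v).real_toNNReal]
  constructor <;> intro h <;> refine h.congr (Filter.Eventually.of_forall fun x => ?_) <;>
    simp [NNReal.smul_def, Real.coe_toNNReal _ (gaussianPDFReal_nonneg 0 v x)]

lemma gaussianPDFReal_zero_mean (v : ℝ≥0) (x : ℝ) :
    gaussianPDFReal 0 v x = (√(2 * π * v))⁻¹ * Real.exp (-(2*(v:ℝ))⁻¹ * x^2) := by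
  rw [gaussianPDFReal]
  congr 1
  rcases eq_or_ne v 0 with h | h
  · simp [h]
  · have hv : (0:ℝ) < v := by positivity
    congr 1
    field_simp
    ring

lemma integrable_abs_pow_gaussianReal (v : ℝ≥0) (n : ℕ) :
    Integrable (fun x : ℝ => |x| ^ n) (gaussianReal 0 v) := by
  rcases eq_or_ne v 0 with h | h
  · subst h
    rw [gaussianReal_zero_var]
    refine ⟨(measurable_id.abs.pow measurable_const).aestronglyMeasurable, ?_⟩
    rw [HasFiniteIntegral, lintegral_dirac' _ (by measurability)]
    exact ENNReal.coe_lt_top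
  · rw [integrable_gaussianReal_iff h]
    have hb : (0:ℝ) < (2*(v:ℝ))⁻¹ := by
      have : (0:ℝ) < v := by positivity
      positivity
    refine ((integrable_abs_pow_mul_exp hb n).const_mul ((√(2 * π * v))⁻¹)).congr
      (Filter.Eventually.of_forall fun x => ?_)
    simp only [gaussianPDFReal_zero_mean]
    ring

lemma integrable_pow_gaussianReal (v : ℝ≥0) (n : ℕ) :
    Integrable (fun x : ℝ => x ^ n) (gaussianReal 0 v) := by
  refine (integrable_abs_pow_gaussianReal v n).mono'
    ((measurable_id'.pow_const _).aestronglyMeasurable)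
    (Filter.Eventually.of_forall fun x => ?_)
  rw [Real.norm_eq_abs, abs_pow]

lemma integral_pow_gaussianReal_odd (v : ℝ≥0) {n : ℕ} (hn : Odd n) :
    ∫ x, x ^ n ∂(gaussianReal 0 v) = 0 := by
  have hmap := gaussianReal_map_const_mul (μ := 0) (v := v) (-1)
  have hv' : (NNReal.mk ((-1:ℝ)^2) (sq_nonneg _) * v : ℝ≥0) = v := by
    simp
  rw [show (-1:ℝ)*0 = 0 by ring, hv'] at hmap
  have heq : ∫ x, x ^ n ∂(gaussianReal 0 v) = ∫ x, (-1*x) ^ n ∂(gaussianReal 0 v) := by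
    conv_lhs => rw [← hmap]
    rw [integral_map (φ := fun x : ℝ => -1 * x) (f := fun x : ℝ => x ^ n)
      (measurable_const_mul (-1)).aemeasurable
      ((measurable_id'.pow_const _).aestronglyMeasurable)]
  simp only [neg_one_mul, hn.neg_pow] at heq
  rw [integral_neg] at heq
  linarith

lemma gauss_even_aux {v : ℝ≥0} (hv : v ≠ 0) (m : ℕ) :
    ∫ x, x ^ (2*m) ∂(gaussianReal 0 v) =
      (√(2 * π * v))⁻¹ * (2 * ((2*(v:ℝ))⁻¹ ^ (-((2*(m:ℝ)) + 1) / 2) * (1 / 2) *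
        Real.Gamma (((2*(m:ℝ)) + 1) / 2))) := by
  have hb : (0:ℝ) < (2*(v:ℝ))⁻¹ := by
    have : (0:ℝ) < v := by positivity
    positivity
  rw [integral_gaussianReal_eq hv]
  have h1 : ∀ x : ℝ, gaussianPDFReal 0 v x * x ^ (2*m) =
      (√(2 * π * v))⁻¹ * (x ^ (2*m) * Real.exp (-(2*(v:ℝ))⁻¹ * x^2)) := by
    intro x
    rw [gaussianPDFReal_zero_mean]
    ring
  simp_rw [h1]
  rw [integral_const_mul]
  congr 1
  have h2 : ∀ x : ℝ, x ^ (2*m) * Real.exp (-(2*(v:ℝ))⁻¹ * x^2) =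
      (fun t : ℝ => t ^ (2*m) * Real.exp (-(2*(v:ℝ))⁻¹ * t^2)) |x| := by
    intro x
    simp only
    rw [pow_mul, pow_mul, sq_abs]
  rw [show (fun x : ℝ => x ^ (2*m) * Real.exp (-(2*(v:ℝ))⁻¹ * x^2)) =
      (fun x : ℝ => (fun t : ℝ => t ^ (2*m) * Real.exp (-(2*(v:ℝ))⁻¹ * t^2)) |x|)
      from funext h2]
  rw [integral_comp_abs (f := fun t : ℝ => t ^ (2*m) * Real.exp (-(2*(v:ℝ))⁻¹ * t^2))]
  congr 1
  rw [← integral_rpow_mul_exp_neg_mul_rpow (p := 2) (q := (2*(m:ℝ))) (by norm_num)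
    (by have := Nat.cast_nonneg (α := ℝ) m; linarith) hb]
  · refine setIntegral_congr_fun measurableSet_Ioi fun x hx => ?_
    have : x ^ ((2:ℝ)*m) = x ^ (2*m) := by
      rw [show (2:ℝ)*m = ((2*m : ℕ) : ℝ) by push_cast; ring, Real.rpow_natCast]
    rw [this, show x ^ (2:ℝ) = x^2 by rw [show ((2:ℝ)) = ((2:ℕ):ℝ) by norm_num, Real.rpow_natCast]]

lemma gauss_even_step {v : ℝ≥0} (hv : v ≠ 0) (m : ℕ) :
    ∫ x, x ^ (2*(m+1)) ∂(gaussianReal 0 v) =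
      (2*(m:ℝ)+1) * (v:ℝ) * ∫ x, x ^ (2*m) ∂(gaussianReal 0 v) := by
  have hb : (0:ℝ) < (2*(v:ℝ))⁻¹ := by
    have : (0:ℝ) < v := by positivity
    positivity
  have hvpos : (0:ℝ) < v := by positivity
  rw [gauss_even_aux hv m, gauss_even_aux hv (m+1)]
  have hG : Real.Gamma ((2*((m:ℝ)+1) + 1) / 2) =
      ((2*(m:ℝ)+1)/2) * Real.Gamma ((2*(m:ℝ)+1)/2) := by
    rw [show (2*((m:ℝ)+1) + 1) / 2 = (2*(m:ℝ)+1)/2 + 1 by ring]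
    exact Real.Gamma_add_one (by positivity)
  have hB : (2*(v:ℝ))⁻¹ ^ (-(2*((m:ℝ)+1) + 1) / 2) =
      (2*(v:ℝ))⁻¹ ^ (-(2*(m:ℝ) + 1) / 2) * (2*(v:ℝ)) := by
    rw [show (-(2*((m:ℝ)+1) + 1) / 2) = (-(2*(m:ℝ) + 1) / 2) + (-1) by ring,
      Real.rpow_add hb, Real.rpow_neg_one, inv_inv]
  push_cast
  rw [hG, hB]
  ring

lemma integral_pow_gaussianReal_even (v : ℝ≥0) (m : ℕ) :
    ∫ x, x ^ (2*m) ∂(gaussianReal 0 v) = df m * (v:ℝ)^m := by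
  rcases eq_or_ne v 0 with h | h
  · subst h
    rw [gaussianReal_zero_var, integral_dirac]
    cases m with
    | zero => simp [df]
    | succ m => simp [zero_pow]
  · induction m with
    | zero => simp [df]
    | succ m ih =>
      rw [gauss_even_step h m, ih, df]
      push_cast
      ring

lemma integral_sq_gaussianReal (v : ℝ≥0) :
    ∫ x, x ^ 2 ∂(gaussianReal 0 v) = (v:ℝ) := by
  have := integral_pow_gaussianReal_even v 1
  norm_num [df] at this
  simpa using this

section Comb

variable {κ ι : Type*} [Fintype κ] [Fintype ι] [DecidableEq κ] [DecidableEq ι]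

lemma count_finsupp_iff (u : κ → ι) :
    (∑ k, Finsupp.single (u k) 1 : ι →₀ ℕ) = (∑ i, Finsupp.single i 1) ↔
      Function.Bijective u := by
  have key : ∀ i : ι, ((∑ k, Finsupp.single (u k) 1 : ι →₀ ℕ) i) =
      (univ.filter fun k => u k = i).card := by
    intro i
    rw [Finset.card_filter, Finsupp.finset_sum_apply]
    exact Finset.sum_congr rfl fun k _ => by rw [Finsupp.single_apply]
  have key2 : ∀ i : ι, ((∑ i', Finsupp.single i' 1 : ι →₀ ℕ) i) = 1 := by
    intro i
    rw [Finsupp.finset_sum_apply]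
    simp [Finsupp.single_apply]
  rw [Function.bijective_iff_existsUnique]
  constructor
  · intro h i
    have := congrArg (fun d : ι →₀ ℕ => d i) h
    simp only [key, key2] at this
    obtain ⟨a, ha⟩ := Finset.card_eq_one.1 this
    have hmem : a ∈ univ.filter fun k => u k = i := ha ▸ Finset.mem_singleton_self a
    refine ⟨a, (Finset.mem_filter.1 hmem).2, fun y hy => ?_⟩
    have : y ∈ univ.filter fun k => u k = i := Finset.mem_filter.2 ⟨Finset.mem_univ _, hy⟩
    rw [ha, Finset.mem_singleton] at this
    exact this
  · intro h
    ext i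
    rw [key, key2]
    obtain ⟨a, ha, hu⟩ := h i
    rw [Finset.card_eq_one]
    exact ⟨a, Finset.eq_singleton_iff_unique_mem.2
      ⟨Finset.mem_filter.2 ⟨Finset.mem_univ _, ha⟩,
        fun y hy => hu y (Finset.mem_filter.1 hy).2⟩⟩

lemma card_filter_bijective (n : ℕ) :
    (univ.filter fun g : Fin n → Fin n => Function.Bijective g).card = n.factorial := by
  rw [show n.factorial = (univ : Finset (Equiv.Perm (Fin n))).card by
    rw [Finset.card_univ, Fintype.card_perm, Fintype.card_fin]]
  refine Finset.card_bij (fun g hg => Equiv.ofBijective g (Finset.mem_filter.1 hg).2)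
    (fun _ _ => Finset.mem_univ _) ?_ ?_
  · intro g hg g' hg' h
    have : ∀ x, g x = g' x := fun x => by
      have := congrArg (fun e : Equiv.Perm (Fin n) => e x) h
      simpa using this
    exact funext this
  · intro e _
    exact ⟨⇑e, Finset.mem_filter.2 ⟨Finset.mem_univ _, e.bijective⟩, by ext x; rfl⟩

end Comb

section Blocks

variable {r m : ℕ}

lemma card_blocks (hr : r = 2 * m) (f : Fin r → Fin r) (hinv : ∀ x, f (f x) = x)
    (hfp : ∀ i, f i ≠ i) : (univ.filter fun i => i < f i).card = m := by
  have hsplit := Finset.card_filter_add_card_filter_not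
    (s := (univ : Finset (Fin r))) (p := fun i => i < f i)
  simp only [not_lt] at hsplit
  have hbij : (univ.filter fun i => f i ≤ i).card =
      (univ.filter fun i => i < f i).card := by
    refine Finset.card_bij (fun a _ => f a) ?_ ?_ ?_
    · intro a ha
      rw [Finset.mem_filter] at ha ⊢
      refine ⟨Finset.mem_univ _, ?_⟩
      rw [hinv a]
      exact lt_of_le_of_ne ha.2 (hfp a)
    · intro a _ b _ hab
      have := congrArg f hab
      rwa [hinv, hinv] at this
    · intro j hj
      rw [Finset.mem_filter] at hj
      refine ⟨f j, Finset.mem_filter.2 ⟨Finset.mem_univ _, ?_⟩, hinv j⟩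
      rw [hinv]
      exact le_of_lt hj.2
  have hcard : (univ : Finset (Fin r)).card = r := by simp
  omega

end Blocks

section SI

variable {r m : ℕ}

/-- Enumeration of the blocks (elements `i` with `i < f i`) of an involution. -/
noncomputable def blockEnum (hr : r = 2 * m) (f : Fin r → Fin r) (hinv : ∀ x, f (f x) = x)
    (hfp : ∀ i, f i ≠ i) (k : Fin m) : Fin r :=
  ((univ.filter fun i => i < f i).orderIsoOfFin (card_blocks hr f hinv hfp) k : Fin r)

lemma blockEnum_lt (hr : r = 2 * m) (f : Fin r → Fin r) (hinv : ∀ x, f (f x) = x)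
    (hfp : ∀ i, f i ≠ i) (k : Fin m) :
    blockEnum hr f hinv hfp k < f (blockEnum hr f hinv hfp k) :=
  (Finset.mem_filter.1
    ((univ.filter fun i => i < f i).orderIsoOfFin (card_blocks hr f hinv hfp) k).2).2

lemma blockEnum_inj (hr : r = 2 * m) (f : Fin r → Fin r) (hinv : ∀ x, f (f x) = x)
    (hfp : ∀ i, f i ≠ i) : Function.Injective (blockEnum hr f hinv hfp) := by
  intro a b h
  have := ((univ.filter fun i => i < f i).orderIsoOfFin
    (card_blocks hr f hinv hfp)).injective (Subtype.ext h)
  exact this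

lemma blockEnum_surj (hr : r = 2 * m) (f : Fin r → Fin r) (hinv : ∀ x, f (f x) = x)
    (hfp : ∀ i, f i ≠ i) {j : Fin r} (hj : j < f j) :
    ∃ k, blockEnum hr f hinv hfp k = j := by
  refine ⟨((univ.filter fun i => i < f i).orderIsoOfFin (card_blocks hr f hinv hfp)).symm
    ⟨j, Finset.mem_filter.2 ⟨Finset.mem_univ _, hj⟩⟩, ?_⟩
  rw [blockEnum]
  rw [OrderIso.apply_symm_apply]

/-- The function underlying the equivalence associated to an involution, a permutation of the
blocks and an orientation of each block. -/
noncomputable def mkF (hr : r = 2 * m) (f : Fin r → Fin r) (hinv : ∀ x, f (f x) = x)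
    (hfp : ∀ i, f i ≠ i) (pp : Equiv.Perm (Fin m)) (ε : Fin m → Bool) :
    Fin m × Bool → Fin r := fun kb =>
  if kb.2 = ε kb.1 then blockEnum hr f hinv hfp (pp kb.1)
  else f (blockEnum hr f hinv hfp (pp kb.1))

lemma mkF_bijective (hr : r = 2 * m) (f : Fin r → Fin r) (hinv : ∀ x, f (f x) = x)
    (hfp : ∀ i, f i ≠ i) (pp : Equiv.Perm (Fin m)) (ε : Fin m → Bool) :
    Function.Bijective (mkF hr f hinv hfp pp ε) := by
  rw [Fintype.bijective_iff_injective_and_card]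
  refine ⟨?_, by simp [hr, mul_comm]⟩
  rintro ⟨k, b⟩ ⟨k', b'⟩ h
  simp only [mkF] at h
  by_cases h1 : b = ε k <;> by_cases h2 : b' = ε k'
  · rw [if_pos h1, if_pos h2] at h
    have hk : k = k' := pp.injective (blockEnum_inj hr f hinv hfp h)
    subst hk
    rw [Prod.mk.injEq]
    exact ⟨rfl, by rw [h1, h2]⟩
  · rw [if_pos h1, if_neg h2] at h
    exfalso
    have l1 := blockEnum_lt hr f hinv hfp (pp k)
    have l2 := blockEnum_lt hr f hinv hfp (pp k')
    rw [h] at l1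
    rw [hinv] at l1
    exact lt_asymm l1 l2
  · rw [if_neg h1, if_pos h2] at h
    exfalso
    have l1 := blockEnum_lt hr f hinv hfp (pp k)
    have l2 := blockEnum_lt hr f hinv hfp (pp k')
    rw [← h] at l2
    rw [hinv] at l2
    exact lt_asymm l1 l2
  · rw [if_neg h1, if_neg h2] at h
    have hff : Function.Injective f := Function.Involutive.injective hinv
    have hk : k = k' := pp.injective (blockEnum_inj hr f hinv hfp (hff h))
    subst hk
    rw [Prod.mk.injEq]
    refine ⟨rfl, ?_⟩
    revert h1 h2
    cases b <;> cases b' <;> cases ε k <;> simp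

/-- The equivalence `Fin m × Bool ≃ Fin r` associated to an involution, a permutation of the
blocks and an orientation of each block. -/
noncomputable def mkE (hr : r = 2 * m) (f : Fin r → Fin r) (hinv : ∀ x, f (f x) = x)
    (hfp : ∀ i, f i ≠ i) (pp : Equiv.Perm (Fin m)) (ε : Fin m → Bool) :
    (Fin m × Bool) ≃ Fin r :=
  Equiv.ofBijective _ (mkF_bijective hr f hinv hfp pp ε)

lemma mkE_apply (hr : r = 2 * m) (f : Fin r → Fin r) (hinv : ∀ x, f (f x) = x)
    (hfp : ∀ i, f i ≠ i) (pp : Equiv.Perm (Fin m)) (ε : Fin m → Bool) (kb : Fin m × Bool) :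
    mkE hr f hinv hfp pp ε kb = mkF hr f hinv hfp pp ε kb := rfl

lemma mkF_partner (hr : r = 2 * m) (f : Fin r → Fin r) (hinv : ∀ x, f (f x) = x)
    (hfp : ∀ i, f i ≠ i) (pp : Equiv.Perm (Fin m)) (ε : Fin m → Bool) (k : Fin m) (b : Bool) :
    f (mkF hr f hinv hfp pp ε (k, b)) = mkF hr f hinv hfp pp ε (k, !b) := by
  by_cases h1 : b = ε k
  · have h2 : ¬ ((!b) = ε k) := by rw [← h1]; simp
    simp only [mkF, if_pos h1, if_neg h2]
  · have h2 : (!b) = ε k := by revert h1; cases b <;> cases ε k <;> simp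
    simp only [mkF, if_neg h1, if_pos h2]
    exact hinv _

end SI

lemma wick_sum_equiv {r m : ℕ} (hr : r = 2 * m) (Cov : Fin r → Fin r → ℝ)
    (hsym : ∀ i j, Cov i j = Cov j i) :
    ∑ e : (Fin m × Bool) ≃ Fin r, ∏ k : Fin m, Cov (e (k, false)) (e (k, true)) =
      ((m.factorial : ℝ) * 2 ^ m) *
        ∑ f ∈ univ.filter (fun f : Fin r → Fin r => (∀ x, f (f x) = x) ∧ ∀ i, f i ≠ i),
          ∏ i ∈ univ.filter (fun i => i < f i), Cov i (f i) := by
  classical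
  have main : ∑ p ∈ (univ.filter
        (fun f : Fin r → Fin r => (∀ x, f (f x) = x) ∧ ∀ i, f i ≠ i)) ×ˢ
      (univ : Finset (Equiv.Perm (Fin m) × (Fin m → Bool))),
      (∏ i ∈ univ.filter (fun i => i < p.1 i), Cov i (p.1 i)) =
      ∑ e : (Fin m × Bool) ≃ Fin r, ∏ k : Fin m, Cov (e (k, false)) (e (k, true)) := by
    refine Finset.sum_bij
      (fun p hp => mkE hr p.1 (Finset.mem_filter.1 (Finset.mem_product.1 hp).1).2.1
        (Finset.mem_filter.1 (Finset.mem_product.1 hp).1).2.2 p.2.1 p.2.2)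
      (fun _ _ => Finset.mem_univ _) ?_ ?_ ?_
    · -- injectivity
      rintro ⟨f₁, pp₁, ε₁⟩ hp₁ ⟨f₂, pp₂, ε₂⟩ hp₂ h
      have hi₁ : ∀ x, f₁ (f₁ x) = x := (Finset.mem_filter.1 (Finset.mem_product.1 hp₁).1).2.1
      have hq₁ : ∀ i, f₁ i ≠ i := (Finset.mem_filter.1 (Finset.mem_product.1 hp₁).1).2.2
      have hi₂ : ∀ x, f₂ (f₂ x) = x := (Finset.mem_filter.1 (Finset.mem_product.1 hp₂).1).2.1
      have hq₂ : ∀ i, f₂ i ≠ i := (Finset.mem_filter.1 (Finset.mem_product.1 hp₂).1).2.2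
      have hfun : mkF hr f₁ hi₁ hq₁ pp₁ ε₁ = mkF hr f₂ hi₂ hq₂ pp₂ ε₂ := by
        funext kb
        exact congrArg (fun e : (Fin m × Bool) ≃ Fin r => e kb) h
      have hf : f₁ = f₂ := by
        funext j
        obtain ⟨kb, hkb⟩ := (mkF_bijective hr f₁ hi₁ hq₁ pp₁ ε₁).surjective j
        calc f₁ j = f₁ (mkF hr f₁ hi₁ hq₁ pp₁ ε₁ (kb.1, kb.2)) := by rw [← hkb]
          _ = mkF hr f₁ hi₁ hq₁ pp₁ ε₁ (kb.1, !kb.2) := mkF_partner ..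
          _ = mkF hr f₂ hi₂ hq₂ pp₂ ε₂ (kb.1, !kb.2) := by rw [hfun]
          _ = f₂ (mkF hr f₂ hi₂ hq₂ pp₂ ε₂ (kb.1, kb.2)) := (mkF_partner ..).symm
          _ = f₂ (mkF hr f₁ hi₁ hq₁ pp₁ ε₁ (kb.1, kb.2)) := by rw [hfun]
          _ = f₂ j := by rw [← hkb]
      subst hf
      have hε : ε₁ = ε₂ := by
        funext k
        by_contra hne
        have hx := congrFun hfun (k, ε₁ k)
        rw [show mkF hr f₁ hi₁ hq₁ pp₁ ε₁ (k, ε₁ k)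
            = blockEnum hr f₁ hi₁ hq₁ (pp₁ k) from if_pos rfl] at hx
        rw [show mkF hr f₁ hi₂ hq₂ pp₂ ε₂ (k, ε₁ k)
            = f₁ (blockEnum hr f₁ hi₂ hq₂ (pp₂ k)) from if_neg hne] at hx
        have l1 := blockEnum_lt hr f₁ hi₁ hq₁ (pp₁ k)
        have l2 := blockEnum_lt hr f₁ hi₂ hq₂ (pp₂ k)
        rw [hx] at l1
        rw [hi₁] at l1
        exact lt_asymm l1 l2
      subst hε
      have hpp : pp₁ = pp₂ := by
        apply Equiv.ext
        intro k
        apply blockEnum_inj hr f₁ hi₁ hq₁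
        have hx := congrFun hfun (k, ε₁ k)
        rw [show mkF hr f₁ hi₁ hq₁ pp₁ ε₁ (k, ε₁ k)
            = blockEnum hr f₁ hi₁ hq₁ (pp₁ k) from if_pos rfl] at hx
        rw [show mkF hr f₁ hi₂ hq₂ pp₂ ε₁ (k, ε₁ k)
            = blockEnum hr f₁ hi₂ hq₂ (pp₂ k) from if_pos rfl] at hx
        exact hx
      rw [hpp]
    · -- surjectivity
      intro e _
      set f : Fin r → Fin r := fun j => e ((e.symm j).1, !(e.symm j).2) with hfdef
      have hpair : ∀ (k : Fin m) (b : Bool), f (e (k, b)) = e (k, !b) := by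
        intro k b
        simp only [hfdef, Equiv.symm_apply_apply]
      have hinv : ∀ x, f (f x) = x := by
        intro x
        have h1 : e.symm (f x) = ((e.symm x).1, !(e.symm x).2) := by
          show e.symm (e _) = _
          exact e.symm_apply_apply _
        show e ((e.symm (f x)).1, !(e.symm (f x)).2) = x
        rw [h1]
        show e ((e.symm x).1, !!(e.symm x).2) = x
        rw [Bool.not_not, Prod.mk.eta, e.apply_symm_apply]
      have hfp : ∀ i, f i ≠ i := by
        intro i hEq
        have h1 : e ((e.symm i).1, !(e.symm i).2) = e ((e.symm i).1, (e.symm i).2) := by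
          rw [Prod.mk.eta, e.apply_symm_apply]
          exact hEq
        have := e.injective h1
        rw [Prod.mk.injEq] at this
        exact Bool.not_ne_self _ this.2
      have hne2 : ∀ k : Fin m, e (k, false) ≠ e (k, true) := by
        intro k hEq
        have := e.injective hEq
        rw [Prod.mk.injEq] at this
        exact Bool.false_ne_true this.2
      set μ : Fin m → Fin r := fun k =>
        if e (k, false) < e (k, true) then e (k, false) else e (k, true) with hμ
      set ε : Fin m → Bool := fun k =>
        if e (k, false) < e (k, true) then false else true with hε
      have hεe : ∀ k, e (k, ε k) = μ k := by
        intro k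
        by_cases h : e (k, false) < e (k, true)
        · simp only [hμ, hε, if_pos h]
        · simp only [hμ, hε, if_neg h]
      have hμlt : ∀ k, μ k < f (μ k) := by
        intro k
        by_cases h : e (k, false) < e (k, true)
        · simp only [hμ, if_pos h]
          rw [hpair]
          exact h
        · simp only [hμ, if_neg h]
          rw [hpair, Bool.not_true]
          exact lt_of_le_of_ne (not_lt.1 h) (Ne.symm (hne2 k))
      have hμinj : Function.Injective μ := by
        intro k k' hEq
        rw [← hεe, ← hεe] at hEq
        have := e.injective hEq
        rw [Prod.mk.injEq] at this
        exact this.1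
      set pp₀ : Fin m → Fin m := fun k =>
        ((univ.filter fun i => i < f i).orderIsoOfFin (card_blocks hr f hinv hfp)).symm
          ⟨μ k, Finset.mem_filter.2 ⟨Finset.mem_univ _, hμlt k⟩⟩ with hpp₀
      have hpp₀inj : Function.Injective pp₀ := by
        intro k k' hEq
        apply hμinj
        have := congrArg ((univ.filter fun i => i < f i).orderIsoOfFin
          (card_blocks hr f hinv hfp)) hEq
        rw [OrderIso.apply_symm_apply, OrderIso.apply_symm_apply] at this
        exact congrArg Subtype.val this
      have hpp₀bij : Function.Bijective pp₀ :=
        (Finite.injective_iff_bijective).1 hpp₀inj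
      set pp : Equiv.Perm (Fin m) := Equiv.ofBijective pp₀ hpp₀bij with hpp
      have hbe : ∀ k, blockEnum hr f hinv hfp (pp k) = μ k := by
        intro k
        rw [blockEnum]
        show (((univ.filter fun i => i < f i).orderIsoOfFin
          (card_blocks hr f hinv hfp)) (pp₀ k) : Fin r) = μ k
        rw [hpp₀]
        rw [OrderIso.apply_symm_apply]
      refine ⟨⟨f, pp, ε⟩, Finset.mem_product.2
        ⟨Finset.mem_filter.2 ⟨Finset.mem_univ _, hinv, hfp⟩, Finset.mem_univ _⟩, ?_⟩
      apply Equiv.ext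
      rintro ⟨k, b⟩
      rw [mkE_apply]
      by_cases hb : b = ε k
      · rw [show mkF hr f _ _ pp ε (k, b) = blockEnum hr f _ _ (pp k) from if_pos hb]
        rw [hbe, ← hεe, hb]
      · rw [show mkF hr f _ _ pp ε (k, b) = f (blockEnum hr f _ _ (pp k)) from if_neg hb]
        rw [hbe, ← hεe, hpair]
        have : (!(ε k)) = b := by revert hb; cases b <;> cases ε k <;> simp
        rw [this]
    · -- values
      rintro ⟨f, pp, ε⟩ hp
      have hinv := (Finset.mem_filter.1 (Finset.mem_product.1 hp).1).2.1
      have hfp := (Finset.mem_filter.1 (Finset.mem_product.1 hp).1).2.2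
      have hterm : ∀ k : Fin m,
          Cov (mkF hr f hinv hfp pp ε (k, false)) (mkF hr f hinv hfp pp ε (k, true)) =
          Cov (blockEnum hr f hinv hfp (pp k)) (f (blockEnum hr f hinv hfp (pp k))) := by
        intro k
        rcases hb : ε k with _ | _
        · rw [show mkF hr f hinv hfp pp ε (k, false) = blockEnum hr f hinv hfp (pp k) from
            if_pos (by rw [hb])]
          rw [show mkF hr f hinv hfp pp ε (k, true) = f (blockEnum hr f hinv hfp (pp k)) from
            if_neg (by rw [hb]; simp)]
        · rw [show mkF hr f hinv hfp pp ε (k, false) = f (blockEnum hr f hinv hfp (pp k)) from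
            if_neg (by rw [hb]; simp)]
          rw [show mkF hr f hinv hfp pp ε (k, true) = blockEnum hr f hinv hfp (pp k) from
            if_pos (by rw [hb])]
          exact hsym _ _
      calc ∏ i ∈ univ.filter (fun i => i < f i), Cov i (f i)
          = ∏ k : Fin m, Cov (blockEnum hr f hinv hfp k) (f (blockEnum hr f hinv hfp k)) := by
            refine (Finset.prod_bij (fun k _ => blockEnum hr f hinv hfp k) ?_ ?_ ?_ ?_).symm
            · intro k _
              exact Finset.mem_filter.2 ⟨Finset.mem_univ _, blockEnum_lt hr f hinv hfp k⟩
            · intro a _ b _ hEq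
              exact blockEnum_inj hr f hinv hfp hEq
            · intro j hj
              obtain ⟨k, hk⟩ := blockEnum_surj hr f hinv hfp (Finset.mem_filter.1 hj).2
              exact ⟨k, Finset.mem_univ _, hk⟩
            · intro k _
              rfl
        _ = ∏ k : Fin m, Cov (blockEnum hr f hinv hfp (pp k)) (f (blockEnum hr f hinv hfp (pp k))) :=
            (Equiv.prod_comp pp
              (fun k => Cov (blockEnum hr f hinv hfp k) (f (blockEnum hr f hinv hfp k)))).symm
        _ = ∏ k : Fin m, Cov (mkF hr f hinv hfp pp ε (k, false)) (mkF hr f hinv hfp pp ε (k, true)) := by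
            exact Finset.prod_congr rfl fun k _ => (hterm k).symm
        _ = _ := rfl
  rw [← main, Finset.sum_product, Finset.mul_sum]
  refine Finset.sum_congr rfl fun f hf => ?_
  calc (∑ _y : Equiv.Perm (Fin m) × (Fin m → Bool),
        ∏ i ∈ univ.filter (fun i => i < f i), Cov i (f i))
      = (Finset.univ : Finset (Equiv.Perm (Fin m) × (Fin m → Bool))).card •
        ∏ i ∈ univ.filter (fun i => i < f i), Cov i (f i) := Finset.sum_const _
    _ = _ := by
        rw [Finset.card_univ, Fintype.card_prod, Fintype.card_perm,
          Fintype.card_fun, Fintype.card_fin, Fintype.card_bool, nsmul_eq_mul]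
        push_cast
        ring


lemma prod_monomial {σ R ι : Type*} [CommSemiring R] (s : Finset ι) (d : ι → σ →₀ ℕ)
    (a : ι → R) :
    ∏ i ∈ s, MvPolynomial.monomial (d i) (a i) =
      MvPolynomial.monomial (∑ i ∈ s, d i) (∏ i ∈ s, a i) := by
  induction s using Finset.cons_induction with
  | empty => simp [MvPolynomial.monomial_zero']
  | cons j s hj ih =>
    rw [Finset.prod_cons, ih, MvPolynomial.monomial_mul, Finset.sum_cons, Finset.prod_cons]

lemma memLp_of_gaussian {Ω : Type*} [MeasureSpace Ω] {Y : Ω → ℝ} (hY : Measurable Y) {v : ℝ≥0}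
    (hlaw : Measure.map Y ℙ = gaussianReal 0 v) (n : ℕ) (hn : n ≠ 0) :
    MemLp Y n ℙ := by
  have hn' : ((n : ℝ≥0∞)) ≠ 0 := by exact_mod_cast Nat.cast_ne_zero.2 hn
  have hnt : ((n : ℝ≥0∞)) ≠ ⊤ := ENNReal.natCast_ne_top n
  have hid : MemLp (fun x : ℝ => x) ((n : ℝ≥0∞)) (gaussianReal 0 v) := by
    have hint : Integrable (fun x : ℝ =>
        ‖(fun y : ℝ => y) x‖ ^ ((n : ℝ≥0∞)).toReal) (gaussianReal 0 v) := by
      have h := integrable_abs_pow_gaussianReal v n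
      refine h.congr (Filter.Eventually.of_forall fun x => ?_)
      simp only [ENNReal.toReal_natCast, Real.norm_eq_abs, Real.rpow_natCast]
    have hiff := memLp_norm_rpow_iff (μ := gaussianReal 0 v) (f := fun x : ℝ => x)
      (p := (n : ℝ≥0∞)) (q := (n : ℝ≥0∞)) aestronglyMeasurable_id hn' hnt
    rw [ENNReal.div_self hn' hnt] at hiff
    exact hiff.1 (memLp_one_iff_integrable.2 hint)
  rw [← hlaw] at hid
  exact (memLp_map_measure_iff aestronglyMeasurable_id hY.aemeasurable).1 hid

lemma memLp_finset_prod {Ω : Type*} [MeasureSpace Ω] [IsProbabilityMeasure (ℙ : Measure Ω)]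
    {ι : Type*} (s : Finset ι) (F : ι → Ω → ℝ)
    (h : ∀ i, ∀ n : ℕ, n ≠ 0 → MemLp (F i) n ℙ) :
    ∀ n : ℕ, n ≠ 0 → MemLp (fun ω => ∏ i ∈ s, F i ω) n ℙ := by
  classical
  induction s using Finset.cons_induction with
  | empty =>
    intro n hn
    simpa using memLp_const (E := ℝ) (μ := (ℙ : Measure Ω)) (p := (n : ℝ≥0∞)) 1
  | cons j s hj ih =>
    intro n hn
    have hn2 : ((2 * n : ℕ) : ℝ≥0∞) = 2 * (n : ℝ≥0∞) := by push_cast; rfl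
    have hnn : ((n : ℝ≥0∞)) ≠ 0 := by exact_mod_cast Nat.cast_ne_zero.2 hn
    have key : (1 : ℝ≥0∞) / (n : ℝ≥0∞) =
        1 / ((2 * n : ℕ) : ℝ≥0∞) + 1 / ((2 * n : ℕ) : ℝ≥0∞) := by
      calc (1 : ℝ≥0∞) / (n : ℝ≥0∞) = 2 * 1 / (2 * (n : ℝ≥0∞)) :=
            (ENNReal.mul_div_mul_left 1 (n : ℝ≥0∞) two_ne_zero ENNReal.ofNat_ne_top).symm
        _ = (1 + 1) / (2 * (n : ℝ≥0∞)) := by rw [mul_one, one_add_one_eq_two]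
        _ = 1 / ((2 * n : ℕ) : ℝ≥0∞) + 1 / ((2 * n : ℕ) : ℝ≥0∞) := by
            rw [hn2, ENNReal.div_add_div_same]
    haveI : ENNReal.HolderTriple ((2 * n : ℕ) : ℝ≥0∞) ((2 * n : ℕ) : ℝ≥0∞) (n : ℝ≥0∞) :=
      ⟨by simpa only [one_div] using key.symm⟩
    have hmul := MemLp.smul (𝕜 := ℝ) (f := fun ω => ∏ i ∈ s, F i ω) (φ := F j) (r := (n : ℝ≥0∞))
      (ih (2 * n) (by omega)) (h j (2 * n) (by omega))
    have : (F j • fun ω => ∏ i ∈ s, F i ω) = fun ω => ∏ i ∈ Finset.cons j s hj, F i ω := by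
      funext ω
      rw [Finset.prod_cons]
      rfl
    rwa [this] at hmul



section Main

/-- Wick's formula: for a centered jointly Gaussian vector `(X₁,...,X_r)`, the expectation
`E[X₁⋯X_r]` vanishes when `r` is odd, and equals the sum over pair partitions (encoded as
fixed-point-free involutions `f` of `Fin r`) of the products of the pair covariances when
`r` is even. -/
theorem wick_formula (r : ℕ) (Ω : Type*) [MeasureSpace Ω]
    [IsProbabilityMeasure (ℙ : Measure Ω)]
    (X : Fin r → Ω → ℝ) (hmeas : ∀ i, Measurable (X i))
    (hgauss : ∀ c : Fin r → ℝ, ∃ v : NNReal,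
      Measure.map (fun ω => ∑ i, c i * X i ω) ℙ = gaussianReal 0 v) :
    (Odd r → ∫ ω, ∏ i, X i ω = 0) ∧
    (Even r → ∫ ω, ∏ i, X i ω =
      ∑ f ∈ Finset.univ.filter
          (fun f : Fin r → Fin r => (∀ x, f (f x) = x) ∧ ∀ i, f i ≠ i),
        ∏ i ∈ Finset.univ.filter (fun i => i < f i), ∫ ω, X i ω * X (f i) ω) := by
  classical
  -- laws of the single coordinates
  have hlaw : ∀ j, ∃ v : NNReal, Measure.map (X j) ℙ = gaussianReal 0 v := by
    intro j
    obtain ⟨v, hv⟩ := hgauss (fun i => if i = j then 1 else 0)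
    refine ⟨v, ?_⟩
    rw [← hv]
    congr 1
    funext ω
    rw [Finset.sum_congr rfl (fun i _ => show (if i = j then (1:ℝ) else 0) * X i ω
      = if i = j then X i ω else 0 by split <;> simp)]
    rw [Finset.sum_ite_eq' Finset.univ j (fun i => X i ω)]
    simp
  have hLp : ∀ j (n : ℕ), n ≠ 0 → MemLp (X j) n ℙ := by
    intro j n hn
    obtain ⟨v, hv⟩ := hlaw j
    exact memLp_of_gaussian (hmeas j) hv n hn
  have hint : ∀ {ι : Type} [Fintype ι] (g : ι → Fin r),
      Integrable (fun ω => ∏ k, X (g k) ω) ℙ := by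
    intro ι _ g
    have := memLp_finset_prod Finset.univ (fun k => X (g k))
      (fun k n hn => hLp (g k) n hn) 1 one_ne_zero
    rw [Nat.cast_one] at this
    exact memLp_one_iff_integrable.1 this
  have hint2 : ∀ i j, Integrable (fun ω => X i ω * X j ω) ℙ := by
    intro i j
    have h := hint (ι := Bool) (fun b => if b then i else j)
    refine h.congr (Filter.Eventually.of_forall fun ω => ?_)
    show (∏ k : Bool, X (if k then i else j) ω) = X i ω * X j ω
    rw [Fintype.prod_bool]
    simp
  -- the mixed-moments identity
  have MI : ∀ c : Fin r → ℝ,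
      (∑ g : Fin r → Fin r, (∏ k, c (g k)) * ∫ ω, ∏ k, X (g k) ω) =
        (if Odd r then 0 else df (r/2) *
          (∑ p : Fin r × Fin r, c p.1 * c p.2 * ∫ ω, X p.1 ω * X p.2 ω) ^ (r/2)) := by
    intro c
    obtain ⟨v, hv⟩ := hgauss c
    have hSmeas : Measurable (fun ω => ∑ i, c i * X i ω) :=
      Finset.measurable_sum _ (fun i _ => (hmeas i).const_mul (c i))
    have hmom : ∀ n : ℕ, (∫ ω, (∑ i, c i * X i ω) ^ n) = ∫ x, x ^ n ∂(gaussianReal 0 v) := by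
      intro n
      rw [← hv, integral_map hSmeas.aemeasurable
        ((measurable_id'.pow_const _).aestronglyMeasurable)]
    have hvar : (v : ℝ) = ∑ p : Fin r × Fin r, c p.1 * c p.2 * ∫ ω, X p.1 ω * X p.2 ω := by
      have h2 := hmom 2
      rw [integral_sq_gaussianReal] at h2
      rw [← h2]
      have hexp2 : (fun ω : Ω => (∑ i, c i * X i ω) ^ 2)
          = fun ω => ∑ p : Fin r × Fin r, c p.1 * c p.2 * (X p.1 ω * X p.2 ω) := by
        funext ω
        rw [sq, Finset.sum_mul_sum, ← Finset.univ_product_univ, Finset.sum_product]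
        exact Finset.sum_congr rfl fun i _ => Finset.sum_congr rfl fun j _ => by ring
      rw [hexp2, integral_finset_sum _ (fun p _ => ((hint2 p.1 p.2).const_mul _))]
      exact Finset.sum_congr rfl fun p _ => integral_const_mul _ _
    have hexp : (fun ω : Ω => (∑ i, c i * X i ω) ^ r)
        = fun ω => ∑ g : Fin r → Fin r, (∏ k, c (g k)) * ∏ k, X (g k) ω := by
      funext ω
      rw [show (∑ i, c i * X i ω) ^ r = ∏ _k : Fin r, (∑ i, c i * X i ω) by
        rw [Finset.prod_const, Finset.card_univ, Fintype.card_fin]]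
      rw [Finset.prod_univ_sum, Fintype.piFinset_univ]
      exact Finset.sum_congr rfl fun g _ => Finset.prod_mul_distrib
    have hlhs : (∫ ω, (∑ i, c i * X i ω) ^ r)
        = ∑ g : Fin r → Fin r, (∏ k, c (g k)) * ∫ ω, ∏ k, X (g k) ω := by
      rw [hexp, integral_finset_sum _ (fun g _ => ((hint g).const_mul _))]
      exact Finset.sum_congr rfl fun g _ => integral_const_mul _ _
    rw [← hlhs, hmom r]
    rcases Nat.even_or_odd r with he | ho
    · rw [if_neg (by rwa [Nat.not_odd_iff_even])]
      have hform := integral_pow_gaussianReal_even v (r/2)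
      rw [show 2 * (r/2) = r from by obtain ⟨k, hk⟩ := he; omega] at hform
      rw [hform, hvar]
    · rw [if_pos ho, integral_pow_gaussianReal_odd v ho]
  -- the polynomial P
  set P : MvPolynomial (Fin r) ℝ :=
    ∑ g : Fin r → Fin r, MvPolynomial.C (∫ ω, ∏ k, X (g k) ω) * ∏ k, MvPolynomial.X (g k)
    with hPdef
  have hevalP : ∀ c : Fin r → ℝ, MvPolynomial.eval c P
      = ∑ g : Fin r → Fin r, (∏ k, c (g k)) * ∫ ω, ∏ k, X (g k) ω := by
    intro c
    rw [hPdef, map_sum]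
    refine Finset.sum_congr rfl fun g _ => ?_
    rw [map_mul, MvPolynomial.eval_C, MvPolynomial.eval_prod]
    simp only [MvPolynomial.eval_X]
    ring
  have hcoeffP : MvPolynomial.coeff (∑ i, Finsupp.single i 1) P
      = (r.factorial : ℝ) * ∫ ω, ∏ i, X i ω := by
    rw [hPdef, MvPolynomial.coeff_sum]
    have hterm : ∀ g : Fin r → Fin r,
        MvPolynomial.coeff (∑ i, Finsupp.single i 1)
          (MvPolynomial.C (∫ ω, ∏ k, X (g k) ω) * ∏ k, MvPolynomial.X (g k))
        = if Function.Bijective g then ∫ ω, ∏ k, X (g k) ω else 0 := by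
      intro g
      rw [show (∏ k, (MvPolynomial.X (g k) : MvPolynomial (Fin r) ℝ))
          = MvPolynomial.monomial (∑ k, Finsupp.single (g k) 1) 1 by
        rw [show (fun k => (MvPolynomial.X (g k) : MvPolynomial (Fin r) ℝ))
            = fun k => MvPolynomial.monomial (Finsupp.single (g k) 1) 1 from rfl]
        rw [prod_monomial]
        rw [Finset.prod_const_one]]
      rw [MvPolynomial.C_mul_monomial, mul_one, MvPolynomial.coeff_monomial]
      by_cases hb : Function.Bijective g
      · rw [if_pos ((count_finsupp_iff g).2 hb), if_pos hb]
      · rw [if_neg (fun hc => hb ((count_finsupp_iff g).1 hc)), if_neg hb]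
    rw [Finset.sum_congr rfl fun g _ => hterm g, ← Finset.sum_filter]
    have hEg : ∀ g ∈ Finset.univ.filter (fun g : Fin r → Fin r => Function.Bijective g),
        (∫ ω, ∏ k, X (g k) ω) = ∫ ω, ∏ i, X i ω := by
      intro g hg
      rw [show (fun ω => ∏ k, X (g k) ω) = fun ω => ∏ i, X i ω from
        funext fun ω => Function.Bijective.prod_comp (Finset.mem_filter.1 hg).2 (fun i => X i ω)]
    rw [Finset.sum_congr rfl hEg, Finset.sum_const, card_filter_bijective, nsmul_eq_mul]
  constructor
  · -- odd case
    intro hodd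
    have hP0 : P = 0 := by
      apply MvPolynomial.funext
      intro c
      rw [hevalP c, MI c, if_pos hodd, map_zero]
    rw [hP0, MvPolynomial.coeff_zero] at hcoeffP
    have hfac : (r.factorial : ℝ) ≠ 0 := by positivity
    rcases mul_eq_zero.1 hcoeffP.symm with h | h
    · exact absurd h hfac
    · exact h
  · -- even case
    intro heven
    set m : ℕ := r / 2 with hm
    have hr2 : r = 2 * m := by
      obtain ⟨k, hk⟩ := heven
      rw [hm]
      omega
    set V : MvPolynomial (Fin r) ℝ :=
      ∑ p : Fin r × Fin r, MvPolynomial.C (∫ ω, X p.1 ω * X p.2 ω) *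
        (MvPolynomial.X p.1 * MvPolynomial.X p.2) with hVdef
    have hPQ : P = MvPolynomial.C (df m) * V ^ m := by
      apply MvPolynomial.funext
      intro c
      rw [hevalP c, MI c, if_neg (by rwa [Nat.not_odd_iff_even]), map_mul,
        MvPolynomial.eval_C, map_pow]
      congr 2
      rw [hVdef, map_sum]
      refine Finset.sum_congr rfl fun p _ => ?_
      rw [map_mul, MvPolynomial.eval_C, map_mul, MvPolynomial.eval_X, MvPolynomial.eval_X]
      ring
    -- coefficient of V ^ m
    have hVm : MvPolynomial.coeff (∑ i, Finsupp.single i 1) (V ^ m) =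
        ∑ e : (Fin m × Bool) ≃ Fin r, ∏ k : Fin m,
          ∫ ω, X (e (k, false)) ω * X (e (k, true)) ω := by
      have hVmon : V = ∑ p : Fin r × Fin r,
          MvPolynomial.monomial (Finsupp.single p.1 1 + Finsupp.single p.2 1)
            (∫ ω, X p.1 ω * X p.2 ω) := by
        rw [hVdef]
        refine Finset.sum_congr rfl fun p _ => ?_
        rw [show (MvPolynomial.X p.1 * MvPolynomial.X p.2 : MvPolynomial (Fin r) ℝ)
            = MvPolynomial.monomial (Finsupp.single p.1 1 + Finsupp.single p.2 1) 1 by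
          rw [show (MvPolynomial.X p.1 : MvPolynomial (Fin r) ℝ)
              = MvPolynomial.monomial (Finsupp.single p.1 1) 1 from rfl,
            show (MvPolynomial.X p.2 : MvPolynomial (Fin r) ℝ)
              = MvPolynomial.monomial (Finsupp.single p.2 1) 1 from rfl,
            MvPolynomial.monomial_mul, mul_one]]
        rw [MvPolynomial.C_mul_monomial, mul_one]
      rw [show V ^ m = ∏ _k : Fin m, V by
        rw [Finset.prod_const, Finset.card_univ, Fintype.card_fin]]
      rw [hVmon, Finset.prod_univ_sum, Fintype.piFinset_univ, MvPolynomial.coeff_sum]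
      have hterm : ∀ h : Fin m → Fin r × Fin r,
          MvPolynomial.coeff (∑ i, Finsupp.single i 1)
            (∏ k, MvPolynomial.monomial
              (Finsupp.single (h k).1 1 + Finsupp.single (h k).2 1)
              (∫ ω, X (h k).1 ω * X (h k).2 ω))
          = if Function.Bijective (fun kb : Fin m × Bool =>
              (if kb.2 then (h kb.1).2 else (h kb.1).1))
            then ∏ k, ∫ ω, X (h k).1 ω * X (h k).2 ω else 0 := by
        intro h
        rw [prod_monomial, MvPolynomial.coeff_monomial]
        have hcnt : (∑ k, (Finsupp.single (h k).1 1 + Finsupp.single (h k).2 1))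
            = ∑ kb : Fin m × Bool, Finsupp.single
              ((fun kb : Fin m × Bool => (if kb.2 then (h kb.1).2 else (h kb.1).1)) kb) 1 := by
          rw [Fintype.sum_prod_type]
          refine Finset.sum_congr rfl fun k _ => ?_
          rw [Fintype.sum_bool]
          simp [add_comm]
        by_cases hb : Function.Bijective (fun kb : Fin m × Bool =>
            (if kb.2 then (h kb.1).2 else (h kb.1).1))
        · rw [if_pos (by rw [hcnt]; exact (count_finsupp_iff _).2 hb), if_pos hb]
        · rw [if_neg (fun hc => hb ((count_finsupp_iff _).1 (by rw [← hcnt]; exact hc))),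
            if_neg hb]
      rw [Finset.sum_congr rfl fun h _ => hterm h, ← Finset.sum_filter]
      -- now a bijection with equivalences
      refine Finset.sum_bij (fun h hh => Equiv.ofBijective _ (Finset.mem_filter.1 hh).2)
        (fun _ _ => Finset.mem_univ _) ?_ ?_ ?_
      · intro h₁ hh₁ h₂ hh₂ hEq
        funext k
        have h1 := congrArg (fun e : (Fin m × Bool) ≃ Fin r => e (k, false)) hEq
        have h2 := congrArg (fun e : (Fin m × Bool) ≃ Fin r => e (k, true)) hEq
        simp only [Equiv.ofBijective_apply] at h1 h2
        exact Prod.ext h1 h2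
      · intro e _
        refine ⟨fun k => (e (k, false), e (k, true)), ?_, ?_⟩
        · have hu : (fun kb : Fin m × Bool =>
              (if kb.2 then ((fun k => (e (k, false), e (k, true))) kb.1).2
                else ((fun k => (e (k, false), e (k, true))) kb.1).1)) = ⇑e := by
            funext kb
            rcases kb with ⟨k, b⟩
            cases b <;> simp
          refine Finset.mem_filter.2 ⟨Finset.mem_univ _, ?_⟩
          rw [hu]
          exact e.bijective
        · apply Equiv.ext
          rintro ⟨k, b⟩
          rw [Equiv.ofBijective_apply]
          cases b <;> simp
      · intro h hh
        refine Finset.prod_congr rfl fun k _ => ?_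
        rw [show (Equiv.ofBijective _ (Finset.mem_filter.1 hh).2) (k, false)
            = (h k).1 from rfl,
          show (Equiv.ofBijective _ (Finset.mem_filter.1 hh).2) (k, true)
            = (h k).2 from rfl]
    -- put everything together
    have hSI := wick_sum_equiv hr2 (fun i j => ∫ ω, X i ω * X j ω)
      (fun i j => by simp_rw [mul_comm])
    have hchain : (r.factorial : ℝ) * ∫ ω, ∏ i, X i ω
        = (r.factorial : ℝ) * ∑ f ∈ Finset.univ.filter
            (fun f : Fin r → Fin r => (∀ x, f (f x) = x) ∧ ∀ i, f i ≠ i),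
          ∏ i ∈ Finset.univ.filter (fun i => i < f i), ∫ ω, X i ω * X (f i) ω := by
      rw [← hcoeffP, hPQ, MvPolynomial.coeff_C_mul, hVm, hSI, ← mul_assoc]
      congr 1
      rw [df_mul_fact m, hr2]
    have hfac : (r.factorial : ℝ) ≠ 0 := by positivity
    exact mul_left_cancel₀ hfac hchain

end Main
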